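/- Let | be the modified Hamster-Wheel operator, let r ∈ [1, m−1], and let |' and D' = ⟨ℝ, <, d'⟩ be the r-modification of | and of the Hamster-Wheel pseudo-distance D, respectively. Then |' = |_{D'}, i.e. V |' W = V |_{D'} W for all V, W ⊆ 𝒱. -/

import Mathlib

/-- `lt` is a strict total order on `C`. -/
def StrictTotalOrder' {C : Type*} (lt : C → C → Prop) : Prop :=
  (∀ c, ¬ lt c c) ∧ (∀ a b c, lt a b → lt b c → lt a c) ∧
  (∀ a b, a ≠ b → lt a b ∨ lt b a)

/-- The operator induced by a pseudo-distance `⟨C, lt, d⟩`: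
`V |_D W = {w ∈ W : ∃ v ∈ V, ∀ v' ∈ V, ∀ w' ∈ W, d(v,w) ⪯ d(v',w')}`. -/
def inducedOp {𝒱 C : Type*} (lt : C → C → Prop) (d : 𝒱 → 𝒱 → C)
    (A B : Set 𝒱) : Set 𝒱 :=
  {w ∈ B | ∃ v ∈ A, ∀ v' ∈ A, ∀ w' ∈ B, lt (d v w) (d v' w') ∨ d v w = d v' w'}

/-- The elements `v 1, …, v m, w 1, …, w m` are `2m` pairwise distinct elements. -/
def hwDistinct {𝒱 : Type*} (m : ℕ) (v w : ℕ → 𝒱) : Prop :=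
  (∀ i ∈ Set.Icc 1 m, ∀ j ∈ Set.Icc 1 m, v i ≠ w j) ∧
  (∀ i ∈ Set.Icc 1 m, ∀ j ∈ Set.Icc 1 m, v i = v j → i = j) ∧
  (∀ i ∈ Set.Icc 1 m, ∀ j ∈ Set.Icc 1 m, w i = w j → i = j)

/-- `X = {v 1, …, v m, w 1, …, w m}`. -/
def hwX {𝒱 : Type*} (m : ℕ) (v w : ℕ → 𝒱) : Set 𝒱 :=
  {x | ∃ i ∈ Set.Icc 1 m, x = v i ∨ x = w i}

open Classical in
/-- The Hamster-Wheel pseudo-distance `d : 𝒱 × 𝒱 → ℝ`. -/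
noncomputable def hwD {𝒱 : Type*} (m : ℕ) (v w : ℕ → 𝒱) (a b : 𝒱) : ℝ :=
  if a = b then 0
  else if ¬ (({a, b} : Set 𝒱) ⊆ hwX m v w) then 1
  else if (∃ i ∈ Set.Icc 1 m, ∃ j ∈ Set.Icc 1 m, a = v i ∧ b = v j) ∨
      (∃ i ∈ Set.Icc 1 m, ∃ j ∈ Set.Icc 1 m, a = w i ∧ b = w j) then 1.1
  else if ∃ i ∈ Set.Icc 1 m, ({a, b} : Set 𝒱) = {v i, w i} then 1.4
  else if ∃ i ∈ Set.Icc 1 m, ∃ j ∈ Set.Icc 1 m,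
      ({a, b} : Set 𝒱) = {v i, w j} ∧ ((i : ℤ) - j).natAbs ∈ ({1, m - 1} : Set ℕ) then 2
  else 1.2

open Classical in
/-- The modified Hamster-Wheel operator `|` on `𝒫(𝒱)`. -/
noncomputable def hwOp {𝒱 : Type*} (m : ℕ) (v w : ℕ → 𝒱) (A B : Set 𝒱) : Set 𝒱 :=
  if A = ({v m, v 1} : Set 𝒱) ∧ B = ({w m, w 1} : Set 𝒱) then {w m}
  else if A = ({w m, w 1} : Set 𝒱) ∧ B = ({v m, v 1} : Set 𝒱) then {v m}
  else inducedOp (· < ·) (hwD m v w) A B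

open Classical in
/-- The `r`-modification `|'` of the modified Hamster-Wheel operator. -/
noncomputable def hwOp' {𝒱 : Type*} (m : ℕ) (v w : ℕ → 𝒱) (r : ℕ) (A B : Set 𝒱) : Set 𝒱 :=
  if A = ({v r, v (r + 1)} : Set 𝒱) ∧ B = ({w r, w (r + 1)} : Set 𝒱) then {w (r + 1)}
  else if A = ({w r, w (r + 1)} : Set 𝒱) ∧ B = ({v r, v (r + 1)} : Set 𝒱) then {v (r + 1)}
  else hwOp m v w A B

open Classical in
/-- The `r`-modification `d'` of the Hamster-Wheel pseudo-distance. -/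
noncomputable def hwD' {𝒱 : Type*} (m : ℕ) (v w : ℕ → 𝒱) (r : ℕ) (a b : 𝒱) : ℝ :=
  if ∃ i ∈ Set.Icc (r + 1) m, ({a, b} : Set 𝒱) = {v i, w i} then 1.3
  else hwD m v w a b

lemma mem_inducedOp {𝒱 : Type*} (d : 𝒱 → 𝒱 → ℝ) (A B : Set 𝒱) (x : 𝒱) :
    x ∈ inducedOp (· < ·) d A B ↔ x ∈ B ∧ ∃ u ∈ A, ∀ a ∈ A, ∀ b ∈ B, d u x ≤ d a b := by
  simp only [inducedOp, Set.mem_setOf_eq, Set.mem_sep_iff, ← le_iff_lt_or_eq]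

lemma inducedOp_congr {𝒱 : Type*} {d1 d2 : 𝒱 → 𝒱 → ℝ} {A B : Set 𝒱}
    (h : ∀ a ∈ A, ∀ b ∈ B, d1 a b = d2 a b) :
    inducedOp (· < ·) d1 A B = inducedOp (· < ·) d2 A B := by
  ext x
  simp only [mem_inducedOp]
  constructor
  · rintro ⟨hxB, u, huA, hmin⟩
    exact ⟨hxB, u, huA, fun a ha b hb => by
      rw [← h u huA x hxB, ← h a ha b hb]; exact hmin a ha b hb⟩
  · rintro ⟨hxB, u, huA, hmin⟩
    exact ⟨hxB, u, huA, fun a ha b hb => by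
      rw [h u huA x hxB, h a ha b hb]; exact hmin a ha b hb⟩

lemma inducedOp_pair {𝒱 : Type*} (d : 𝒱 → 𝒱 → ℝ) (a1 a2 b1 b2 : 𝒱) (hb : b1 ≠ b2)
    {x11 x12 x21 x22 : ℝ}
    (h11 : d a1 b1 = x11) (h12 : d a1 b2 = x12) (h21 : d a2 b1 = x21) (h22 : d a2 b2 = x22)
    (l1 : x22 < x11) (l2 : x22 < x21) (l3 : x22 ≤ x12) :
    inducedOp (· < ·) d {a1, a2} {b1, b2} = {b2} := by
  ext x
  simp only [mem_inducedOp, Set.mem_insert_iff, Set.mem_singleton_iff]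
  constructor
  · rintro ⟨hx, u, hu, hmin⟩
    rcases hx with rfl | rfl
    · exfalso
      have hm2 := hmin a2 (Or.inr rfl) b2 (Or.inr rfl)
      rw [h22] at hm2
      rcases hu with rfl | rfl
      · rw [h11] at hm2; linarith
      · rw [h21] at hm2; linarith
    · rfl
  · rintro rfl
    refine ⟨Or.inr rfl, a2, Or.inr rfl, ?_⟩
    rintro a (rfl | rfl) b (rfl | rfl) <;>
      simp only [h11, h12, h21, h22] <;> linarith

section Eval
variable {𝒱 : Type*} {m : ℕ} {v w : ℕ → 𝒱} (hdist : hwDistinct m v w)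

lemma hwD_vw (hdist : hwDistinct m v w) {i j : ℕ} (hi : i ∈ Set.Icc 1 m) (hj : j ∈ Set.Icc 1 m) :
    hwD m v w (v i) (w j) =
      if i = j then 1.4
      else if ((i : ℤ) - j).natAbs = 1 ∨ ((i : ℤ) - j).natAbs = m - 1 then 2 else 1.2 := by
  obtain ⟨hvw, hvv, hww⟩ := hdist
  have hne : v i ≠ w j := hvw i hi j hj
  have hsub : ({v i, w j} : Set 𝒱) ⊆ hwX m v w := by
    intro x hx
    rcases hx with h | h
    · exact ⟨i, hi, Or.inl h⟩
    · exact ⟨j, hj, Or.inr h⟩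
  have hc3 : ¬((∃ p ∈ Set.Icc 1 m, ∃ q ∈ Set.Icc 1 m, v i = v p ∧ w j = v q) ∨
      (∃ p ∈ Set.Icc 1 m, ∃ q ∈ Set.Icc 1 m, v i = w p ∧ w j = w q)) := by
    rintro (⟨p, hp, q, hq, _, h2⟩ | ⟨p, hp, q, hq, h1, _⟩)
    · exact hvw q hq j hj h2.symm
    · exact hvw i hi p hp h1
  unfold hwD
  rw [if_neg hne, if_neg (not_not_intro hsub), if_neg hc3]
  by_cases hij : i = j
  · rw [if_pos ⟨i, hi, by rw [hij]⟩, if_pos hij]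
  · have hc4 : ¬ ∃ k ∈ Set.Icc 1 m, ({v i, w j} : Set 𝒱) = {v k, w k} := by
      rintro ⟨k, hk, hpair⟩
      rcases Set.pair_eq_pair_iff.mp hpair with ⟨h1, h2⟩ | ⟨h1, h2⟩
      · exact hij ((hvv i hi k hk h1).trans (hww j hj k hk h2).symm)
      · exact hvw i hi k hk h1
    rw [if_neg hc4, if_neg hij]
    by_cases hc5 : ((i : ℤ) - j).natAbs = 1 ∨ ((i : ℤ) - j).natAbs = m - 1
    · rw [if_pos ⟨i, hi, j, hj, rfl, by simpa using hc5⟩, if_pos hc5]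
    · have : ¬ ∃ p ∈ Set.Icc 1 m, ∃ q ∈ Set.Icc 1 m,
          ({v i, w j} : Set 𝒱) = {v p, w q} ∧ ((p : ℤ) - q).natAbs ∈ ({1, m - 1} : Set ℕ) := by
        rintro ⟨p, hp, q, hq, hpair, habs⟩
        rcases Set.pair_eq_pair_iff.mp hpair with ⟨h1, h2⟩ | ⟨h1, h2⟩
        · obtain rfl : i = p := hvv i hi p hp h1
          obtain rfl : j = q := hww j hj q hq h2
          exact hc5 (by simpa using habs)
        · exact hvw i hi q hq h1
      rw [if_neg this, if_neg hc5]

lemma hwD_wv (hdist : hwDistinct m v w) {i j : ℕ} (hi : i ∈ Set.Icc 1 m) (hj : j ∈ Set.Icc 1 m) :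
    hwD m v w (w i) (v j) =
      if i = j then 1.4
      else if ((i : ℤ) - j).natAbs = 1 ∨ ((i : ℤ) - j).natAbs = m - 1 then 2 else 1.2 := by
  obtain ⟨hvw, hvv, hww⟩ := hdist
  have hne : w i ≠ v j := (hvw j hj i hi).symm
  have hsub : ({w i, v j} : Set 𝒱) ⊆ hwX m v w := by
    intro x hx
    rcases hx with h | h
    · exact ⟨i, hi, Or.inr h⟩
    · exact ⟨j, hj, Or.inl h⟩
  have hc3 : ¬((∃ p ∈ Set.Icc 1 m, ∃ q ∈ Set.Icc 1 m, w i = v p ∧ v j = v q) ∨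
      (∃ p ∈ Set.Icc 1 m, ∃ q ∈ Set.Icc 1 m, w i = w p ∧ v j = w q)) := by
    rintro (⟨p, hp, q, hq, h1, _⟩ | ⟨p, hp, q, hq, _, h2⟩)
    · exact hvw p hp i hi h1.symm
    · exact hvw j hj q hq h2
  unfold hwD
  rw [if_neg hne, if_neg (not_not_intro hsub), if_neg hc3]
  by_cases hij : i = j
  · rw [if_pos ⟨i, hi, by rw [hij, Set.pair_comm]⟩, if_pos hij]
  · have hc4 : ¬ ∃ k ∈ Set.Icc 1 m, ({w i, v j} : Set 𝒱) = {v k, w k} := by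
      rintro ⟨k, hk, hpair⟩
      rcases Set.pair_eq_pair_iff.mp hpair with ⟨h1, h2⟩ | ⟨h1, h2⟩
      · exact hvw k hk i hi h1.symm
      · exact hij ((hww i hi k hk h1).trans (hvv j hj k hk h2).symm)
    rw [if_neg hc4, if_neg hij]
    by_cases hc5 : ((i : ℤ) - j).natAbs = 1 ∨ ((i : ℤ) - j).natAbs = m - 1
    · refine (if_pos ⟨j, hj, i, hi, Set.pair_comm _ _, ?_⟩).trans (if_pos hc5).symm
      have : ((j : ℤ) - i).natAbs = ((i : ℤ) - j).natAbs := by omega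
      simpa [this] using hc5
    · have : ¬ ∃ p ∈ Set.Icc 1 m, ∃ q ∈ Set.Icc 1 m,
          ({w i, v j} : Set 𝒱) = {v p, w q} ∧ ((p : ℤ) - q).natAbs ∈ ({1, m - 1} : Set ℕ) := by
        rintro ⟨p, hp, q, hq, hpair, habs⟩
        rcases Set.pair_eq_pair_iff.mp hpair with ⟨h1, h2⟩ | ⟨h1, h2⟩
        · exact hvw p hp i hi h1.symm
        · obtain rfl : j = p := hvv j hj p hp h2
          obtain rfl : i = q := hww i hi q hq h1
          refine hc5 ?_
          have : ((i : ℤ) - j).natAbs = ((j : ℤ) - i).natAbs := by omega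
          simpa [this] using habs
      rw [if_neg this, if_neg hc5]
end Eval

section Eval2
variable {𝒱 : Type*} {m r : ℕ} {v w : ℕ → 𝒱}

lemma hwD'_vw (hdist : hwDistinct m v w) (hr1 : 1 ≤ r) {i j : ℕ}
    (hi : i ∈ Set.Icc 1 m) (hj : j ∈ Set.Icc 1 m) :
    hwD' m v w r (v i) (w j) =
      if i = j then (if r + 1 ≤ i then 1.3 else 1.4)
      else if ((i : ℤ) - j).natAbs = 1 ∨ ((i : ℤ) - j).natAbs = m - 1 then 2 else 1.2 := by
  obtain ⟨hvw, hvv, hww⟩ := hdist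
  rw [Set.mem_Icc] at hi hj
  unfold hwD'
  by_cases hc : ∃ k ∈ Set.Icc (r + 1) m, ({v i, w j} : Set 𝒱) = {v k, w k}
  · obtain ⟨k, hk, hpair⟩ := hc
    rw [Set.mem_Icc] at hk
    have hk' : k ∈ Set.Icc 1 m := Set.mem_Icc.mpr ⟨by omega, hk.2⟩
    rcases Set.pair_eq_pair_iff.mp hpair with ⟨h1, h2⟩ | ⟨h1, h2⟩
    · have hik : i = k := hvv i (Set.mem_Icc.mpr hi) k hk' h1
      have hjk : j = k := hww j (Set.mem_Icc.mpr hj) k hk' h2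
      rw [if_pos ⟨k, Set.mem_Icc.mpr ⟨hk.1, hk.2⟩, by rw [hik, hjk]⟩,
        if_pos (hik.trans hjk.symm), if_pos (show r + 1 ≤ i by omega)]
    · exact absurd h1 (hvw i (Set.mem_Icc.mpr hi) k hk')
  · rw [if_neg hc, hwD_vw ⟨hvw, hvv, hww⟩ (Set.mem_Icc.mpr hi) (Set.mem_Icc.mpr hj)]
    by_cases hij : i = j
    · rw [if_pos hij, if_pos hij]
      have : ¬ (r + 1 ≤ i) := by
        intro hle
        exact hc ⟨i, Set.mem_Icc.mpr ⟨hle, hi.2⟩, by rw [hij]⟩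
      rw [if_neg this]
    · rw [if_neg hij, if_neg hij]

lemma hwD'_wv (hdist : hwDistinct m v w) (hr1 : 1 ≤ r) {i j : ℕ}
    (hi : i ∈ Set.Icc 1 m) (hj : j ∈ Set.Icc 1 m) :
    hwD' m v w r (w i) (v j) =
      if i = j then (if r + 1 ≤ i then 1.3 else 1.4)
      else if ((i : ℤ) - j).natAbs = 1 ∨ ((i : ℤ) - j).natAbs = m - 1 then 2 else 1.2 := by
  obtain ⟨hvw, hvv, hww⟩ := hdist
  rw [Set.mem_Icc] at hi hj
  unfold hwD'
  by_cases hc : ∃ k ∈ Set.Icc (r + 1) m, ({w i, v j} : Set 𝒱) = {v k, w k}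
  · obtain ⟨k, hk, hpair⟩ := hc
    rw [Set.mem_Icc] at hk
    have hk' : k ∈ Set.Icc 1 m := Set.mem_Icc.mpr ⟨by omega, hk.2⟩
    rcases Set.pair_eq_pair_iff.mp hpair with ⟨h1, h2⟩ | ⟨h1, h2⟩
    · exact absurd h1.symm (hvw k hk' i (Set.mem_Icc.mpr hi))
    · have hik : i = k := hww i (Set.mem_Icc.mpr hi) k hk' h1
      have hjk : j = k := hvv j (Set.mem_Icc.mpr hj) k hk' h2
      rw [if_pos ⟨k, Set.mem_Icc.mpr ⟨hk.1, hk.2⟩, by rw [hik, hjk]; exact Set.pair_comm _ _⟩,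
        if_pos (hik.trans hjk.symm), if_pos (show r + 1 ≤ i by omega)]
  · rw [if_neg hc, hwD_wv ⟨hvw, hvv, hww⟩ (Set.mem_Icc.mpr hi) (Set.mem_Icc.mpr hj)]
    by_cases hij : i = j
    · rw [if_pos hij, if_pos hij]
      have : ¬ (r + 1 ≤ i) := by
        intro hle
        exact hc ⟨i, Set.mem_Icc.mpr ⟨hle, hi.2⟩, by rw [hij, Set.pair_comm]⟩
      rw [if_neg this]
    · rw [if_neg hij, if_neg hij]

lemma hwD_range (m : ℕ) (v w : ℕ → 𝒱) (a b : 𝒱) :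
    hwD m v w a b = 0 ∨ hwD m v w a b = 1 ∨ hwD m v w a b = 1.1 ∨
    hwD m v w a b = 1.2 ∨ hwD m v w a b = 1.4 ∨ hwD m v w a b = 2 := by
  unfold hwD
  split_ifs <;> norm_num

lemma hwD_eq_14 {a b : 𝒱} (h : hwD m v w a b = 1.4) :
    ∃ i ∈ Set.Icc 1 m, ({a, b} : Set 𝒱) = {v i, w i} := by
  unfold hwD at h
  split_ifs at h
  all_goals first | assumption | norm_num at h

lemma hwD_eq_2 {a b : 𝒱} (h : hwD m v w a b = 2) :
    ∃ i ∈ Set.Icc 1 m, ∃ j ∈ Set.Icc 1 m, ({a, b} : Set 𝒱) = {v i, w j} := by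
  unfold hwD at h
  split_ifs at h with h1 h2 h3 h4 h5
  all_goals first
    | (obtain ⟨i, hi, j, hj, hp, _⟩ := h5; exact ⟨i, hi, j, hj, hp⟩)
    | norm_num at h

lemma hwD'_cases (hdist : hwDistinct m v w) (hr1 : 1 ≤ r) (a b : 𝒱) :
    hwD' m v w r a b = hwD m v w a b ∨
    (hwD m v w a b = 1.4 ∧ hwD' m v w r a b = 1.3) := by
  unfold hwD'
  by_cases hc : ∃ k ∈ Set.Icc (r + 1) m, ({a, b} : Set 𝒱) = {v k, w k}
  · right
    rw [if_pos hc]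
    obtain ⟨k, hk, hpair⟩ := hc
    rw [Set.mem_Icc] at hk
    have hk' : k ∈ Set.Icc 1 m := Set.mem_Icc.mpr ⟨by omega, hk.2⟩
    rcases Set.pair_eq_pair_iff.mp hpair with ⟨rfl, rfl⟩ | ⟨rfl, rfl⟩
    · rw [hwD_vw hdist hk' hk', if_pos rfl]; exact ⟨rfl, rfl⟩
    · rw [hwD_wv hdist hk' hk', if_pos rfl]; exact ⟨rfl, rfl⟩
  · left; rw [if_neg hc]

end Eval2

lemma core {𝒱 : Type*} (m r : ℕ) (hm : 4 ≤ m) (hr1 : 1 ≤ r) (hr2 : r ≤ m - 1)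
    (v w : ℕ → 𝒱) (d d' : 𝒱 → 𝒱 → ℝ)
    (hd : ∀ i ∈ Set.Icc 1 m, ∀ j ∈ Set.Icc 1 m, d (v i) (w j) =
      if i = j then 1.4 else
      if ((i : ℤ) - j).natAbs = 1 ∨ ((i : ℤ) - j).natAbs = m - 1 then 2 else 1.2)
    (hd' : ∀ i ∈ Set.Icc 1 m, ∀ j ∈ Set.Icc 1 m, d' (v i) (w j) =
      if i = j then (if r + 1 ≤ i then 1.3 else 1.4) else
      if ((i : ℤ) - j).natAbs = 1 ∨ ((i : ℤ) - j).natAbs = m - 1 then 2 else 1.2)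
    (A B : Set 𝒱)
    (hA : ∀ a ∈ A, ∃ i ∈ Set.Icc 1 m, a = v i)
    (hB : ∀ b ∈ B, ∃ j ∈ Set.Icc 1 m, b = w j)
    (hbig : ∀ a ∈ A, ∀ b ∈ B, d a b = 1.4 ∨ d a b = 2)
    (hex1 : ¬(A = {v r, v (r + 1)} ∧ B = {w r, w (r + 1)}))
    (hex2 : ¬(A = {v m, v 1} ∧ B = {w m, w 1})) :
    inducedOp (· < ·) d A B = inducedOp (· < ·) d' A B := by
  -- key adjacency fact
  have key : ∀ i ∈ Set.Icc 1 m, ∀ j ∈ Set.Icc 1 m, v i ∈ A → w j ∈ B → i ≠ j →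
      (((i : ℤ) - j).natAbs = 1 ∨ ((i : ℤ) - j).natAbs = m - 1) := by
    intro i hi j hj hvA hwB hij
    have hb := hbig _ hvA _ hwB
    rw [hd i hi j hj, if_neg hij] at hb
    by_contra hc
    rw [if_neg hc] at hb
    norm_num at hb
  by_cases huniq : ∀ i j, (i ∈ Set.Icc 1 m ∧ v i ∈ A ∧ w i ∈ B) →
      (j ∈ Set.Icc 1 m ∧ v j ∈ A ∧ w j ∈ B) → i = j
  · by_cases hone : ∃ i, i ∈ Set.Icc 1 m ∧ v i ∈ A ∧ w i ∈ B
    · obtain ⟨i0, hi0, hvA0, hwB0⟩ := hone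
      have dval : d (v i0) (w i0) = 1.4 := by rw [hd i0 hi0 i0 hi0, if_pos rfl]
      have d'val : d' (v i0) (w i0) = if r + 1 ≤ i0 then 1.3 else 1.4 := by
        rw [hd' i0 hi0 i0 hi0, if_pos rfl]
      have hstep : ∀ {i j : ℕ}, i ∈ Set.Icc 1 m → j ∈ Set.Icc 1 m → v i ∈ A → w j ∈ B →
          i = j → j = i0 := by
        intro i j hi hj hvA hwB hij
        have : i = i0 := huniq i i0 ⟨hi, hvA, by rw [hij]; exact hwB⟩ ⟨hi0, hvA0, hwB0⟩
        omega
      trans ({w i0} : Set 𝒱)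
      · ext x
        rw [mem_inducedOp]
        simp only [Set.mem_singleton_iff]
        constructor
        · rintro ⟨hxB, u, huA, hmin⟩
          obtain ⟨i, hi, rfl⟩ := hA u huA
          obtain ⟨j, hj, rfl⟩ := hB x hxB
          have hle := hmin (v i0) hvA0 (w i0) hwB0
          rw [dval] at hle
          have hij : i = j := by
            by_contra hij
            have hc := key i hi j hj huA hxB hij
            rw [hd i hi j hj, if_neg hij, if_pos hc] at hle
            norm_num at hle
          exact congrArg w (hstep hi hj huA hxB hij)
        · rintro rfl
          refine ⟨hwB0, v i0, hvA0, fun a ha b hb => ?_⟩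
          rw [dval]
          rcases hbig a ha b hb with h | h <;> rw [h] <;> norm_num
      · symm
        ext x
        rw [mem_inducedOp]
        simp only [Set.mem_singleton_iff]
        constructor
        · rintro ⟨hxB, u, huA, hmin⟩
          obtain ⟨i, hi, rfl⟩ := hA u huA
          obtain ⟨j, hj, rfl⟩ := hB x hxB
          have hle := hmin (v i0) hvA0 (w i0) hwB0
          rw [d'val] at hle
          have hij : i = j := by
            by_contra hij
            have hc := key i hi j hj huA hxB hij
            rw [hd' i hi j hj, if_neg hij, if_pos hc] at hle
            split_ifs at hle <;> norm_num at hle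
          exact congrArg w (hstep hi hj huA hxB hij)
        · rintro rfl
          refine ⟨hwB0, v i0, hvA0, fun a ha b hb => ?_⟩
          obtain ⟨i, hi, rfl⟩ := hA a ha
          obtain ⟨j, hj, rfl⟩ := hB b hb
          rw [d'val, hd' i hi j hj]
          by_cases hij : i = j
          · have : i = i0 := by
              have := hstep hi hj ha hb hij; omega
            rw [if_pos hij, this]
          · have hc := key i hi j hj ha hb hij
            rw [if_neg hij, if_pos hc]
            split_ifs <;> norm_num
    · apply inducedOp_congr
      intro a ha b hb
      obtain ⟨i, hi, rfl⟩ := hA a ha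
      obtain ⟨j, hj, rfl⟩ := hB b hb
      have hij : i ≠ j := by
        intro h
        exact hone ⟨i, hi, ha, by rw [h]; exact hb⟩
      rw [hd i hi j hj, hd' i hi j hj, if_neg hij, if_neg hij]
  · push_neg at huniq
    obtain ⟨i0, i1, ⟨hi0, hvA0, hwB0⟩, ⟨hi1, hvA1, hwB1⟩, hne⟩ := huniq
    have hadj := key i0 hi0 i1 hi1 hvA0 hwB1 hne
    rw [Set.mem_Icc] at hi0 hi1
    have hAeq : A = {v i0, v i1} := by
      apply Set.Subset.antisymm
      · intro a ha
        obtain ⟨k, hk, rfl⟩ := hA a ha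
        have hk' := Set.mem_Icc.mp hk
        have h0 : k = i0 ∨ (((k : ℤ) - i0).natAbs = 1 ∨ ((k : ℤ) - i0).natAbs = m - 1) := by
          by_cases h : k = i0
          · exact Or.inl h
          · exact Or.inr (key k hk i0 (Set.mem_Icc.mpr hi0) ha hwB0 h)
        have h1 : k = i1 ∨ (((k : ℤ) - i1).natAbs = 1 ∨ ((k : ℤ) - i1).natAbs = m - 1) := by
          by_cases h : k = i1
          · exact Or.inl h
          · exact Or.inr (key k hk i1 (Set.mem_Icc.mpr hi1) ha hwB1 h)
        have : k = i0 ∨ k = i1 := by omega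
        rcases this with rfl | rfl
        · exact Set.mem_insert _ _
        · exact Set.mem_insert_of_mem _ rfl
      · intro a ha
        rcases ha with rfl | ha
        · exact hvA0
        · rw [Set.mem_singleton_iff] at ha; rw [ha]; exact hvA1
    have hBeq : B = {w i0, w i1} := by
      apply Set.Subset.antisymm
      · intro b hb
        obtain ⟨k, hk, rfl⟩ := hB b hb
        have hk' := Set.mem_Icc.mp hk
        have h0 : i0 = k ∨ (((i0 : ℤ) - k).natAbs = 1 ∨ ((i0 : ℤ) - k).natAbs = m - 1) := by
          by_cases h : i0 = k
          · exact Or.inl h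
          · exact Or.inr (key i0 (Set.mem_Icc.mpr hi0) k hk hvA0 hb h)
        have h1 : i1 = k ∨ (((i1 : ℤ) - k).natAbs = 1 ∨ ((i1 : ℤ) - k).natAbs = m - 1) := by
          by_cases h : i1 = k
          · exact Or.inl h
          · exact Or.inr (key i1 (Set.mem_Icc.mpr hi1) k hk hvA1 hb h)
        have : k = i0 ∨ k = i1 := by omega
        rcases this with rfl | rfl
        · exact Set.mem_insert _ _
        · exact Set.mem_insert_of_mem _ rfl
      · intro b hb
        rcases hb with rfl | hb
        · exact hwB0
        · rw [Set.mem_singleton_iff] at hb; rw [hb]; exact hwB1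
    have hpos : (i0 = r ∧ i1 = r + 1) ∨ (i1 = r ∧ i0 = r + 1) ∨
        (i0 = 1 ∧ i1 = m) ∨ (i1 = 1 ∧ i0 = m) ∨
        (i0 ≤ r ∧ i1 ≤ r) ∨ (r + 1 ≤ i0 ∧ r + 1 ≤ i1) := by omega
    rcases hpos with ⟨rfl, rfl⟩ | ⟨rfl, rfl⟩ | ⟨rfl, rfl⟩ | ⟨rfl, rfl⟩ | ⟨hp0, hp1⟩ | ⟨hp0, hp1⟩
    · exact absurd ⟨hAeq, hBeq⟩ hex1
    · exact absurd ⟨hAeq.trans (Set.pair_comm _ _), hBeq.trans (Set.pair_comm _ _)⟩ hex1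
    · exact absurd ⟨hAeq.trans (Set.pair_comm _ _), hBeq.trans (Set.pair_comm _ _)⟩ hex2
    · exact absurd ⟨hAeq, hBeq⟩ hex2
    · -- both diagonals ≤ r : distances agree on A × B
      apply inducedOp_congr
      intro a ha b hb
      rw [hAeq] at ha
      rw [hBeq] at hb
      have hi0' : i0 ∈ Set.Icc 1 m := Set.mem_Icc.mpr hi0
      have hi1' : i1 ∈ Set.Icc 1 m := Set.mem_Icc.mpr hi1
      have hab : (a = v i0 ∨ a = v i1) ∧ (b = w i0 ∨ b = w i1) := by
        constructor
        · rcases ha with h | h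
          · exact Or.inl h
          · exact Or.inr (Set.mem_singleton_iff.mp h)
        · rcases hb with h | h
          · exact Or.inl h
          · exact Or.inr (Set.mem_singleton_iff.mp h)
      obtain ⟨h | h, h' | h'⟩ := hab <;> subst h <;> subst h' <;>
        [rw [hd i0 hi0' i0 hi0', hd' i0 hi0' i0 hi0'];
         rw [hd i0 hi0' i1 hi1', hd' i0 hi0' i1 hi1'];
         rw [hd i1 hi1' i0 hi0', hd' i1 hi1' i0 hi0'];
         rw [hd i1 hi1' i1 hi1', hd' i1 hi1' i1 hi1']]
      · rw [if_pos rfl, if_pos rfl, if_neg (show ¬ (r + 1 ≤ i0) by omega)]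
      · rw [if_neg hne, if_neg hne]
      · rw [if_neg (show i1 ≠ i0 by omega), if_neg (show i1 ≠ i0 by omega)]
      · rw [if_pos rfl, if_pos rfl, if_neg (show ¬ (r + 1 ≤ i1) by omega)]
    · -- both diagonals ≥ r + 1 : both sides equal B
      have hi0' : i0 ∈ Set.Icc 1 m := Set.mem_Icc.mpr hi0
      have hi1' : i1 ∈ Set.Icc 1 m := Set.mem_Icc.mpr hi1
      have hd'bound : ∀ a ∈ A, ∀ b ∈ B, (1.3 : ℝ) ≤ d' a b := by
        intro a ha b hb
        rw [hAeq] at ha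
        rw [hBeq] at hb
        have ha' : a = v i0 ∨ a = v i1 := by
          rcases ha with h | h
          · exact Or.inl h
          · exact Or.inr (Set.mem_singleton_iff.mp h)
        have hb' : b = w i0 ∨ b = w i1 := by
          rcases hb with h | h
          · exact Or.inl h
          · exact Or.inr (Set.mem_singleton_iff.mp h)
        rcases ha' with rfl | rfl <;> rcases hb' with rfl | rfl
        · rw [hd' i0 hi0' i0 hi0', if_pos rfl, if_pos hp0]
        · rw [hd' i0 hi0' i1 hi1', if_neg hne, if_pos hadj]; norm_num
        · rw [hd' i1 hi1' i0 hi0', if_neg (show i1 ≠ i0 by omega),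
            if_pos (show ((i1 : ℤ) - i0).natAbs = 1 ∨ ((i1 : ℤ) - i0).natAbs = m - 1 by omega)]
          norm_num
        · rw [hd' i1 hi1' i1 hi1', if_pos rfl, if_pos hp1]
      trans B
      · apply Set.Subset.antisymm
        · intro x hx
          exact ((mem_inducedOp d A B x).mp hx).1
        · intro b hb
          rw [mem_inducedOp]
          refine ⟨hb, ?_⟩
          rw [hBeq] at hb
          have hb' : b = w i0 ∨ b = w i1 := by
            rcases hb with h | h
            · exact Or.inl h
            · exact Or.inr (Set.mem_singleton_iff.mp h)
          have hgen : ∀ a ∈ A, ∀ b' ∈ B, (1.4 : ℝ) ≤ d a b' := by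
            intro a ha b' hb'
            rcases hbig a ha b' hb' with h | h <;> rw [h] <;> norm_num
          rcases hb' with rfl | rfl
          · exact ⟨v i0, hvA0, fun a ha b' hb'' => by
              rw [hd i0 hi0' i0 hi0', if_pos rfl]; exact hgen a ha b' hb''⟩
          · exact ⟨v i1, hvA1, fun a ha b' hb'' => by
              rw [hd i1 hi1' i1 hi1', if_pos rfl]; exact hgen a ha b' hb''⟩
      · symm
        apply Set.Subset.antisymm
        · intro x hx
          exact ((mem_inducedOp d' A B x).mp hx).1
        · intro b hb
          rw [mem_inducedOp]
          refine ⟨hb, ?_⟩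
          rw [hBeq] at hb
          have hb' : b = w i0 ∨ b = w i1 := by
            rcases hb with h | h
            · exact Or.inl h
            · exact Or.inr (Set.mem_singleton_iff.mp h)
          rcases hb' with rfl | rfl
          · exact ⟨v i0, hvA0, fun a ha b' hb'' => by
              rw [hd' i0 hi0' i0 hi0', if_pos rfl, if_pos hp0]; exact hd'bound a ha b' hb''⟩
          · exact ⟨v i1, hvA1, fun a ha b' hb'' => by
              rw [hd' i1 hi1' i1 hi1', if_pos rfl, if_pos hp1]; exact hd'bound a ha b' hb''⟩

/-- The `r`-modification of the modified Hamster-Wheel operator is induced by the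
`r`-modification of the Hamster-Wheel pseudo-distance. -/
theorem stmt8 {𝒱 : Type*} (m : ℕ) (hm : 4 ≤ m) (v w : ℕ → 𝒱)
    (hdist : hwDistinct m v w)
    (r : ℕ) (hr : r ∈ Set.Icc 1 (m - 1)) :
    ∀ A B : Set 𝒱, hwOp' m v w r A B = inducedOp (· < ·) (hwD' m v w r) A B := by
  obtain ⟨hr1, hr2⟩ := Set.mem_Icc.mp hr
  obtain ⟨hvw, hvv, hww⟩ := id hdist
  have hrm : r ∈ Set.Icc 1 m := Set.mem_Icc.mpr ⟨hr1, by omega⟩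
  have hr1m : r + 1 ∈ Set.Icc 1 m := Set.mem_Icc.mpr ⟨by omega, by omega⟩
  have h1m : 1 ∈ Set.Icc 1 m := Set.mem_Icc.mpr ⟨le_refl 1, by omega⟩
  have hmm : m ∈ Set.Icc 1 m := Set.mem_Icc.mpr ⟨by omega, le_refl m⟩
  intro A B
  unfold hwOp' hwOp
  split_ifs with h1 h2 h3 h4
  · obtain ⟨rfl, rfl⟩ := h1
    have e11 : hwD' m v w r (v r) (w r) = 1.4 := by
      rw [hwD'_vw hdist hr1 hrm hrm, if_pos rfl, if_neg (show ¬ (r + 1 ≤ r) by omega)]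
    have e12 : hwD' m v w r (v r) (w (r + 1)) = 2 := by
      rw [hwD'_vw hdist hr1 hrm hr1m, if_neg (show r ≠ r + 1 by omega),
        if_pos (Or.inl (by omega))]
    have e21 : hwD' m v w r (v (r + 1)) (w r) = 2 := by
      rw [hwD'_vw hdist hr1 hr1m hrm, if_neg (show r + 1 ≠ r by omega),
        if_pos (Or.inl (by omega))]
    have e22 : hwD' m v w r (v (r + 1)) (w (r + 1)) = 1.3 := by
      rw [hwD'_vw hdist hr1 hr1m hr1m, if_pos rfl, if_pos (le_refl _)]
    exact (inducedOp_pair _ _ _ _ _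
      (fun h => by have := hww r hrm (r + 1) hr1m h; omega)
      e11 e12 e21 e22 (by norm_num) (by norm_num) (by norm_num)).symm
  · obtain ⟨rfl, rfl⟩ := h2
    have e11 : hwD' m v w r (w r) (v r) = 1.4 := by
      rw [hwD'_wv hdist hr1 hrm hrm, if_pos rfl, if_neg (show ¬ (r + 1 ≤ r) by omega)]
    have e12 : hwD' m v w r (w r) (v (r + 1)) = 2 := by
      rw [hwD'_wv hdist hr1 hrm hr1m, if_neg (show r ≠ r + 1 by omega),
        if_pos (Or.inl (by omega))]
    have e21 : hwD' m v w r (w (r + 1)) (v r) = 2 := by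
      rw [hwD'_wv hdist hr1 hr1m hrm, if_neg (show r + 1 ≠ r by omega),
        if_pos (Or.inl (by omega))]
    have e22 : hwD' m v w r (w (r + 1)) (v (r + 1)) = 1.3 := by
      rw [hwD'_wv hdist hr1 hr1m hr1m, if_pos rfl, if_pos (le_refl _)]
    exact (inducedOp_pair _ _ _ _ _
      (fun h => by have := hvv r hrm (r + 1) hr1m h; omega)
      e11 e12 e21 e22 (by norm_num) (by norm_num) (by norm_num)).symm
  · obtain ⟨rfl, rfl⟩ := h3
    have e11 : hwD' m v w r (v 1) (w 1) = 1.4 := by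
      rw [hwD'_vw hdist hr1 h1m h1m, if_pos rfl, if_neg (show ¬ (r + 1 ≤ 1) by omega)]
    have e12 : hwD' m v w r (v 1) (w m) = 2 := by
      rw [hwD'_vw hdist hr1 h1m hmm, if_neg (show 1 ≠ m by omega),
        if_pos (Or.inr (by omega))]
    have e21 : hwD' m v w r (v m) (w 1) = 2 := by
      rw [hwD'_vw hdist hr1 hmm h1m, if_neg (show m ≠ 1 by omega),
        if_pos (Or.inr (by omega))]
    have e22 : hwD' m v w r (v m) (w m) = 1.3 := by
      rw [hwD'_vw hdist hr1 hmm hmm, if_pos rfl, if_pos (show r + 1 ≤ m by omega)]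
    rw [Set.pair_comm (v m) (v 1), Set.pair_comm (w m) (w 1)]
    exact (inducedOp_pair _ _ _ _ _
      (fun h => by have := hww 1 h1m m hmm h; omega)
      e11 e12 e21 e22 (by norm_num) (by norm_num) (by norm_num)).symm
  · obtain ⟨rfl, rfl⟩ := h4
    have e11 : hwD' m v w r (w 1) (v 1) = 1.4 := by
      rw [hwD'_wv hdist hr1 h1m h1m, if_pos rfl, if_neg (show ¬ (r + 1 ≤ 1) by omega)]
    have e12 : hwD' m v w r (w 1) (v m) = 2 := by
      rw [hwD'_wv hdist hr1 h1m hmm, if_neg (show 1 ≠ m by omega),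
        if_pos (Or.inr (by omega))]
    have e21 : hwD' m v w r (w m) (v 1) = 2 := by
      rw [hwD'_wv hdist hr1 hmm h1m, if_neg (show m ≠ 1 by omega),
        if_pos (Or.inr (by omega))]
    have e22 : hwD' m v w r (w m) (v m) = 1.3 := by
      rw [hwD'_wv hdist hr1 hmm hmm, if_pos rfl, if_pos (show r + 1 ≤ m by omega)]
    rw [Set.pair_comm (w m) (w 1), Set.pair_comm (v m) (v 1)]
    exact (inducedOp_pair _ _ _ _ _
      (fun h => by have := hvv 1 h1m m hmm h; omega)
      e11 e12 e21 e22 (by norm_num) (by norm_num) (by norm_num)).symm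
  · rcases A.eq_empty_or_nonempty with rfl | hAne
    · ext x; simp [mem_inducedOp]
    rcases B.eq_empty_or_nonempty with rfl | hBne
    · ext x; simp [mem_inducedOp]
    by_cases hsmall : ∃ a ∈ A, ∃ b ∈ B, hwD m v w a b ≤ 1.2
    · obtain ⟨a0, ha0, b0, hb0, hle0⟩ := hsmall
      ext x
      rw [mem_inducedOp, mem_inducedOp]
      constructor
      · rintro ⟨hxB, u, huA, hmin⟩
        refine ⟨hxB, u, huA, fun a ha b hb => ?_⟩
        have hux : hwD m v w u x ≤ 1.2 := le_trans (hmin a0 ha0 b0 hb0) hle0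
        have h1' : hwD' m v w r u x = hwD m v w u x := by
          rcases hwD'_cases hdist hr1 u x with h | ⟨h14, _⟩
          · exact h
          · rw [h14] at hux; norm_num at hux
        rcases hwD'_cases hdist hr1 a b with h | ⟨h14, h13⟩
        · rw [h1', h]; exact hmin a ha b hb
        · rw [h1', h13]; linarith
      · rintro ⟨hxB, u, huA, hmin⟩
        refine ⟨hxB, u, huA, fun a ha b hb => ?_⟩
        have h0' : hwD' m v w r a0 b0 ≤ 1.2 := by
          rcases hwD'_cases hdist hr1 a0 b0 with h | ⟨h14, h13⟩
          · rw [h]; exact hle0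
          · rw [h14] at hle0; norm_num at hle0
        have hux' : hwD' m v w r u x ≤ 1.2 := le_trans (hmin a0 ha0 b0 hb0) h0'
        have h1' : hwD' m v w r u x = hwD m v w u x := by
          rcases hwD'_cases hdist hr1 u x with h | ⟨_, h13⟩
          · exact h
          · rw [h13] at hux'; norm_num at hux'
        rcases hwD'_cases hdist hr1 a b with h | ⟨h14, h13⟩
        · rw [← h1', ← h]; exact hmin a ha b hb
        · rw [h14, ← h1']
          have hm2 := hmin a ha b hb
          rw [h13] at hm2
          linarith
    · have hbig : ∀ a ∈ A, ∀ b ∈ B, hwD m v w a b = 1.4 ∨ hwD m v w a b = 2 := by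
        intro a ha b hb
        have h : ¬ (hwD m v w a b ≤ 1.2) := fun hc => hsmall ⟨a, ha, b, hb, hc⟩
        rcases hwD_range m v w a b with h0 | h0 | h0 | h0 | h0 | h0 <;>
          rw [h0] at h ⊢ <;> revert h <;> norm_num
      have hclass : ∀ a ∈ A, ∀ b ∈ B,
          ((∃ i ∈ Set.Icc 1 m, a = v i) ∧ (∃ j ∈ Set.Icc 1 m, b = w j)) ∨
          ((∃ i ∈ Set.Icc 1 m, a = w i) ∧ (∃ j ∈ Set.Icc 1 m, b = v j)) := by
        intro a ha b hb
        rcases hbig a ha b hb with h | h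
        · obtain ⟨i, hi, hpair⟩ := hwD_eq_14 h
          rcases Set.pair_eq_pair_iff.mp hpair with ⟨h1', h2'⟩ | ⟨h1', h2'⟩
          · exact Or.inl ⟨⟨i, hi, h1'⟩, ⟨i, hi, h2'⟩⟩
          · exact Or.inr ⟨⟨i, hi, h1'⟩, ⟨i, hi, h2'⟩⟩
        · obtain ⟨i, hi, j, hj, hpair⟩ := hwD_eq_2 h
          rcases Set.pair_eq_pair_iff.mp hpair with ⟨h1', h2'⟩ | ⟨h1', h2'⟩
          · exact Or.inl ⟨⟨i, hi, h1'⟩, ⟨j, hj, h2'⟩⟩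
          · exact Or.inr ⟨⟨j, hj, h1'⟩, ⟨i, hi, h2'⟩⟩
      obtain ⟨a0, ha0⟩ := hAne
      obtain ⟨b0, hb0⟩ := hBne
      rcases hclass a0 ha0 b0 hb0 with ⟨⟨i0, hi0, ha0v⟩, ⟨j0, hj0, hb0w⟩⟩ |
        ⟨⟨i0, hi0, ha0w⟩, ⟨j0, hj0, hb0v⟩⟩
      · have hA' : ∀ a ∈ A, ∃ i ∈ Set.Icc 1 m, a = v i := by
          intro a ha
          rcases hclass a ha b0 hb0 with ⟨h, _⟩ | ⟨_, ⟨j, hj, hbv⟩⟩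
          · exact h
          · exact absurd (hbv.symm.trans hb0w) (hvw j hj j0 hj0)
        have hB' : ∀ b ∈ B, ∃ j ∈ Set.Icc 1 m, b = w j := by
          intro b hb
          rcases hclass a0 ha0 b hb with ⟨_, h⟩ | ⟨⟨i, hi, haw⟩, _⟩
          · exact h
          · exact absurd (ha0v.symm.trans haw) (hvw i0 hi0 i hi)
        exact core m r hm hr1 hr2 v w _ _ (fun i hi j hj => hwD_vw hdist hi hj)
          (fun i hi j hj => hwD'_vw hdist hr1 hi hj) A B hA' hB' hbig h1 h3
      · have hA' : ∀ a ∈ A, ∃ i ∈ Set.Icc 1 m, a = w i := by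
          intro a ha
          rcases hclass a ha b0 hb0 with ⟨_, ⟨j, hj, hb0wj⟩⟩ | ⟨h, _⟩
          · exact absurd (hb0v.symm.trans hb0wj) (hvw j0 hj0 j hj)
          · exact h
        have hB' : ∀ b ∈ B, ∃ j ∈ Set.Icc 1 m, b = v j := by
          intro b hb
          rcases hclass a0 ha0 b hb with ⟨⟨i, hi, ha0vi⟩, _⟩ | ⟨_, h⟩
          · exact absurd (ha0vi.symm.trans ha0w) (hvw i hi i0 hi0)
          · exact h
        exact core m r hm hr1 hr2 w v _ _ (fun i hi j hj => hwD_wv hdist hi hj)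
          (fun i hi j hj => hwD'_wv hdist hr1 hi hj) A B hA' hB' hbig h2 h4
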